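/- arXiv:1905.00848 — 2 statements merged into one kernel-verified Lean document; each statement's English description precedes it below -/
import Mathlib

section
/- Let g : 2^X → ℝ be submodular and let T be a random subset of a fixed set A ⊆ X where each element of A is included independently with probability p ∈ [0,1]. Then E[g(T)] ≥ (1 - p) · g(∅) + p · g(A). -/
/-!
Induction on `A`. Conditioning on whether a new element `a ∉ B` is drawn splits the expectation
over `insert a B` into `(1 - p)` times that of `g` over `B` plus `p` times that of
`U ↦ g (insert a U)` over `B`; both functions are submodular, so the induction hypothesis applies
to each. What remains is `p (1 - p)` times `g B + g {a} - g ∅ - g (insert a B)`, which is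
nonnegative by submodularity applied to the disjoint sets `{a}` and `B`.
-/

open Finset

section Submodular

variable {X : Type*}

def IsSubmodular [DecidableEq X] (g : Finset X → ℝ) : Prop :=
  ∀ S T : Finset X, g (S ∪ T) + g (S ∩ T) ≤ g S + g T

/-- `𝔼[f T]` for the random subset `T ⊆ A` containing each element independently with
probability `p`. -/
def expectRandomSubset (p : ℝ) (A : Finset X) (f : Finset X → ℝ) : ℝ :=
  ∑ T ∈ A.powerset, p ^ #T * (1 - p) ^ (#A - #T) * f T

namespace IsSubmodular

variable [DecidableEq X] {g : Finset X → ℝ}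

lemma comp_insert (hg : IsSubmodular g) (a : X) : IsSubmodular fun U ↦ g (insert a U) := by
  intro S T
  simpa only [insert_union_distrib, insert_inter_distrib] using hg (insert a S) (insert a T)

lemma add_empty_le_of_disjoint (hg : IsSubmodular g) {S T : Finset X} (hST : Disjoint S T) :
    g (S ∪ T) + g ∅ ≤ g S + g T := by
  simpa only [disjoint_iff_inter_eq_empty.mp hST] using hg S T

end IsSubmodular

section expectRandomSubset

variable (p : ℝ) (f : Finset X → ℝ)

@[simp]
lemma expectRandomSubset_empty : expectRandomSubset p ∅ f = f ∅ := by
  simp [expectRandomSubset]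

lemma expectRandomSubset_insert [DecidableEq X] {a : X} {B : Finset X} (ha : a ∉ B) :
    expectRandomSubset p (insert a B) f =
      (1 - p) * expectRandomSubset p B f +
        p * expectRandomSubset p B (fun U ↦ f (insert a U)) := by
  simp only [expectRandomSubset, sum_powerset_insert ha, mul_sum, card_insert_of_notMem ha]
  congr 1 <;> refine sum_congr rfl fun T hT ↦ ?_
  · have hTB : #T ≤ #B := card_le_card (mem_powerset.mp hT)
    rw [show #B + 1 - #T = #B - #T + 1 by omega, pow_succ]
    ring
  · have haT : a ∉ T := fun h ↦ ha (mem_powerset.mp hT h)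
    rw [card_insert_of_notMem haT, Nat.add_sub_add_right, pow_succ]
    ring

end expectRandomSubset

theorem IsSubmodular.le_expectRandomSubset [DecidableEq X] {g : Finset X → ℝ}
    (hg : IsSubmodular g) {p : ℝ} (hp0 : 0 ≤ p) (hp1 : p ≤ 1) (A : Finset X) :
    (1 - p) * g ∅ + p * g A ≤ expectRandomSubset p A g := by
  induction A using Finset.induction generalizing g with
  | empty => simp only [expectRandomSubset_empty]; linarith
  | @insert a B ha ih =>
    have hg_B := ih hg
    have hg_insert := ih (hg.comp_insert a)
    rw [insert_empty] at hg_insert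
    have hgap : g (insert a B) + g ∅ ≤ g {a} + g B := by
      rw [insert_eq]
      exact hg.add_empty_le_of_disjoint (disjoint_singleton_left.mpr ha)
    rw [expectRandomSubset_insert p g ha]
    have hq : 0 ≤ 1 - p := sub_nonneg.mpr hp1
    linarith [mul_le_mul_of_nonneg_left hg_B hq, mul_le_mul_of_nonneg_left hg_insert hp0,
      mul_le_mul_of_nonneg_left hgap (mul_nonneg hp0 hq)]

end Submodular

theorem random_subset_expectation_general {X : Type*} [DecidableEq X]
    (g : Finset X → ℝ)
    (hsub : ∀ S T : Finset X, g (S ∪ T) + g (S ∩ T) ≤ g S + g T)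
    (A : Finset X) (p : ℝ) (hp0 : 0 ≤ p) (hp1 : p ≤ 1) :
    (1 - p) * g ∅ + p * g A ≤
      ∑ T ∈ A.powerset, p ^ T.card * (1 - p) ^ (A.card - T.card) * g T :=
  IsSubmodular.le_expectRandomSubset hsub hp0 hp1 A

theorem random_subset_expectation {X : Type*} [Fintype X] [DecidableEq X]
    (g : Finset X → ℝ)
    (hsub : ∀ S T : Finset X, g (S ∪ T) + g (S ∩ T) ≤ g S + g T)
    (A : Finset X) (p : ℝ) (hp0 : 0 ≤ p) (hp1 : p ≤ 1) :
    (1 - p) * g ∅ + p * g A ≤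
      ∑ T ∈ A.powerset, p ^ T.card * (1 - p) ^ (A.card - T.card) * g T :=
  random_subset_expectation_general g hsub A p hp0 hp1
end

section
/- Let v : 2^X → ℝ be a nonnegative submodular function with v(∅) = 0, let A ⊆ X, and let T be a random subset of A including each element independently with probability 1/2. Then E[v(T)] ≥ (1/4) · max_{S ⊆ A} v(S). -/
/-!
Fix a maximiser `S ⊆ A` and let `T` be uniform on the subsets of `A`. Since `T ↦ T ∆ S` and
`T ↦ A \ T` preserve the uniform distribution, submodularity and nonnegativity give
`E v(T ∪ S) ≤ E v(T) + E v(T ∆ S) = 2 E v(T)` and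
`v(A) + v(S) ≤ E v(T ∪ S) + E v((A \ T) ∪ S) = 2 E v(T ∪ S)`, so `v(S) ≤ 4 E v(T)`.
-/

open Finset

namespace Finset

variable {X M : Type*} [DecidableEq X] [AddCommMonoid M]

theorem sum_powerset_comp_symmDiff {A C : Finset X} (hC : C ⊆ A) (f : Finset X → M) :
    ∑ T ∈ A.powerset, f (symmDiff T C) = ∑ T ∈ A.powerset, f T := by
  have maps_to : ∀ T ∈ A.powerset, symmDiff T C ∈ A.powerset := fun T hT =>
    mem_powerset.2 (symmDiff_le_sup.trans (sup_le (mem_powerset.1 hT) hC))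
  exact sum_nbij' (symmDiff · C) (symmDiff · C) maps_to maps_to
    (fun T _ => symmDiff_symmDiff_cancel_right C T)
    (fun T _ => symmDiff_symmDiff_cancel_right C T) (fun _ _ => rfl)

theorem sum_powerset_comp_sdiff {A : Finset X} (f : Finset X → M) :
    ∑ T ∈ A.powerset, f (A \ T) = ∑ T ∈ A.powerset, f T := by
  rw [← sum_powerset_comp_symmDiff subset_rfl f]
  refine sum_congr rfl fun T hT => ?_
  rw [symmDiff_of_le (mem_powerset.1 hT)]

end Finset

section Submodular

variable {X : Type*} [DecidableEq X] {v : Finset X → ℝ}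

theorem union_le_add_symmDiff
    (hsub : ∀ S T : Finset X, v (S ∪ T) + v (S ∩ T) ≤ v S + v T)
    (hnonneg : ∀ S : Finset X, 0 ≤ v S) (S T : Finset X) :
    v (T ∪ S) ≤ v T + v (symmDiff T S) := by
  have h := hsub T (symmDiff T S)
  rw [show T ∪ symmDiff T S = T ∪ S by grind [mem_symmDiff],
    show T ∩ symmDiff T S = T \ S by grind [mem_symmDiff]] at h
  linarith [hnonneg (T \ S)]

theorem add_le_union_add_sdiff_union
    (hsub : ∀ S T : Finset X, v (S ∪ T) + v (S ∩ T) ≤ v S + v T)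
    {A S T : Finset X} (hS : S ⊆ A) (hT : T ⊆ A) :
    v A + v S ≤ v (T ∪ S) + v ((A \ T) ∪ S) := by
  have h := hsub (T ∪ S) ((A \ T) ∪ S)
  rwa [show (T ∪ S) ∪ ((A \ T) ∪ S) = A by grind,
    show (T ∪ S) ∩ ((A \ T) ∪ S) = S by grind] at h

theorem quarter_mul_le_sum_powerset
    (hsub : ∀ S T : Finset X, v (S ∪ T) + v (S ∩ T) ≤ v S + v T)
    (hnonneg : ∀ S : Finset X, 0 ≤ v S)
    {A S : Finset X} (hS : S ⊆ A) :
    1 / 4 * v S ≤ ∑ T ∈ A.powerset, (1 / 2 : ℝ) ^ #A * v T := by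
  have sum_union_le : ∑ T ∈ A.powerset, v (T ∪ S) ≤ 2 * ∑ T ∈ A.powerset, v T :=
    calc ∑ T ∈ A.powerset, v (T ∪ S)
        ≤ ∑ T ∈ A.powerset, (v T + v (symmDiff T S)) :=
          sum_le_sum fun T _ => union_le_add_symmDiff hsub hnonneg S T
      _ = 2 * ∑ T ∈ A.powerset, v T := by
          rw [sum_add_distrib, sum_powerset_comp_symmDiff hS v]; ring
  have le_sum_union : (2 : ℝ) ^ #A * (v A + v S) ≤ 2 * ∑ T ∈ A.powerset, v (T ∪ S) :=
    calc (2 : ℝ) ^ #A * (v A + v S) = ∑ T ∈ A.powerset, (v A + v S) := by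
          rw [sum_const, card_powerset, nsmul_eq_mul]; push_cast; rfl
      _ ≤ ∑ T ∈ A.powerset, (v (T ∪ S) + v ((A \ T) ∪ S)) :=
          sum_le_sum fun T hT => add_le_union_add_sdiff_union hsub hS (mem_powerset.1 hT)
      _ = 2 * ∑ T ∈ A.powerset, v (T ∪ S) := by
          rw [sum_add_distrib, sum_powerset_comp_sdiff fun T => v (T ∪ S)]; ring
  have hA_nonneg : 0 ≤ (2 : ℝ) ^ #A * v A := mul_nonneg (by positivity) (hnonneg A)
  rw [← mul_sum, one_div_pow, one_div_mul_eq_div, one_div_mul_eq_div,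
    div_le_div_iff₀ (by norm_num) (by positivity)]
  linarith

end Submodular

theorem random_subset_quarter_approx_general {X : Type*} [DecidableEq X]
    (v : Finset X → ℝ)
    (hnonneg : ∀ S : Finset X, 0 ≤ v S)
    (hsub : ∀ S T : Finset X, v (S ∪ T) + v (S ∩ T) ≤ v S + v T)
    (A : Finset X) :
    (1 / 4 : ℝ) * (A.powerset.sup' (Finset.powerset_nonempty A) v) ≤
      ∑ T ∈ A.powerset, (1 / 2 : ℝ) ^ A.card * v T := by
  obtain ⟨S, hSA, hS_max⟩ := exists_mem_eq_sup' (powerset_nonempty A) v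
  rw [hS_max]
  exact quarter_mul_le_sum_powerset hsub hnonneg (mem_powerset.1 hSA)

theorem random_subset_quarter_approx {X : Type*} [Fintype X] [DecidableEq X]
    (v : Finset X → ℝ)
    (hzero : v ∅ = 0) (hnonneg : ∀ S : Finset X, 0 ≤ v S)
    (hsub : ∀ S T : Finset X, v (S ∪ T) + v (S ∩ T) ≤ v S + v T)
    (A : Finset X) :
    (1 / 4 : ℝ) * (A.powerset.sup' (Finset.powerset_nonempty A) v) ≤
      ∑ T ∈ A.powerset, (1 / 2 : ℝ) ^ A.card * v T :=
  random_subset_quarter_approx_general v hnonneg hsub A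
end
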